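/- arXiv:1509.01796 — 10 statements merged into one kernel-verified Lean document; each statement's English description precedes it below -/
import Mathlib

section
/- Let G be a connected graph and let n ≥ 2. Then the diameter of G ⊕ N_n equals max{2, D(G)}, where N_n is the edgeless graph on n vertices. -/
open SimpleGraph

/-- The Cartesian sum (disjunctive product) of two simple graphs. -/
def cartSum {α β : Type*} (G : SimpleGraph α) (H : SimpleGraph β) :
    SimpleGraph (α × β) where
  Adj x y := G.Adj x.1 y.1 ∨ H.Adj x.2 y.2
  symm := by
    constructor
    intro x y h
    exact h.imp (fun h' => h'.symm) (fun h' => h'.symm)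
  loopless := by
    constructor
    intro x h
    exact h.elim (fun h' => h'.ne rfl) (fun h' => h'.ne rfl)

/-- Two vertices are true twins if they are distinct and have equal closed
neighborhoods. -/
def TrueTwins {α : Type*} (G : SimpleGraph α) (u v : α) : Prop :=
  u ≠ v ∧ ∀ w, (G.Adj u w ∨ u = w) ↔ (G.Adj v w ∨ v = w)

/-- A twins-free clique: a clique containing no pair of true twins. -/
def IsTFClique {α : Type*} (G : SimpleGraph α) (s : Finset α) : Prop :=
  G.IsClique ↑s ∧ ∀ u ∈ s, ∀ v ∈ s, ¬ TrueTwins G u v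

/-- The twins-free clique number. -/
noncomputable def tfCliqueNum {α : Type*} (G : SimpleGraph α) [Fintype α] : ℕ :=
  sSup {n | ∃ s : Finset α, IsTFClique G s ∧ s.card = n}

/-- A strong resolving set: every pair of distinct vertices is strongly
resolved by some vertex of `S`. -/
def IsStrongResolvingSet {α : Type*} (G : SimpleGraph α) (S : Set α) : Prop :=
  ∀ u v : α, u ≠ v → ∃ w ∈ S,
    G.dist w u = G.dist w v + G.dist v u ∨ G.dist w v = G.dist w u + G.dist u v

/-- The strong metric dimension of a graph. -/
noncomputable def sdim {α : Type*} (G : SimpleGraph α) [Fintype α] : ℕ :=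
  sInf {n | ∃ S : Finset α, IsStrongResolvingSet G ↑S ∧ S.card = n}

/-- A vertex is isolated if it has no neighbors. -/
def IsIsolated {α : Type*} (G : SimpleGraph α) (u : α) : Prop :=
  ∀ w, ¬ G.Adj u w

/-
In `G ⊕ N_n` two vertices are adjacent exactly when their first coordinates are adjacent in `G`.
Hence the projection to `G` is a homomorphism, and a walk of `G` of positive length lifts to one of
the same length between any two vertices over its endpoints (switch the second coordinate on the
first edge). So vertices with distinct first coordinates are at the distance of those coordinates
in `G`, while distinct vertices over the same vertex `a` are non-adjacent with a common neighbour
over any neighbour of `a`, hence at distance `2`. With extended distances this gives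
`ediam (G ⊕ N_n) = max 2 (ediam G)` for every `G` without isolated vertices; connectivity of the
finite graph `G` only serves to make this value finite.
-/

section CartSum

variable {α β γ : Type*}

lemma SimpleGraph.Hom.edist_le {G : SimpleGraph α} {G' : SimpleGraph γ} (f : G →g G') (u v : α) :
    G'.edist (f u) (f v) ≤ G.edist u v := by
  by_cases huv : G.Reachable u v
  · obtain ⟨p, hp⟩ := huv.exists_walk_length_eq_edist
    simpa [hp] using (p.map f).edist_le
  · simp [edist_eq_top_of_not_reachable huv]

variable {G : SimpleGraph α} {H : SimpleGraph β}

def cartSumInclLeft (G : SimpleGraph α) (H : SimpleGraph β) (b : β) : G →g cartSum G H where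
  toFun a := (a, b)
  map_rel' := Or.inl

def cartSumBotFst (G : SimpleGraph α) : cartSum G (⊥ : SimpleGraph β) →g G where
  toFun := Prod.fst
  map_rel' h := h.resolve_right id

lemma edist_cartSum_le_of_fst_ne {a c : α} (hac : a ≠ c) (b d : β) :
    (cartSum G H).edist (a, b) (c, d) ≤ G.edist a c := by
  by_cases hr : G.Reachable a c
  · obtain ⟨p, hp⟩ := hr.exists_walk_length_eq_edist
    cases p with
    | nil => exact absurd rfl hac
    | cons hadj p =>
      have hadj' : (cartSum G H).Adj (a, b) (cartSumInclLeft G H d _) := Or.inl hadj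
      rw [← hp]
      exact (Walk.cons hadj' (p.map (cartSumInclLeft G H d))).edist_le.trans_eq (by simp)
  · simp [edist_eq_top_of_not_reachable hr]

lemma edist_cartSum_bot_of_fst_ne {a c : α} (hac : a ≠ c) (b d : β) :
    (cartSum G ⊥).edist (a, b) (c, d) = G.edist a c :=
  le_antisymm (edist_cartSum_le_of_fst_ne hac b d) ((cartSumBotFst G).edist_le (a, b) (c, d))

lemma edist_cartSum_bot_of_fst_eq {a a' : α} (haa' : G.Adj a a') {b d : β} (hbd : b ≠ d) :
    (cartSum G ⊥).edist (a, b) (a, d) = 2 := by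
  refine edist_eq_two_iff.mpr ⟨fun h ↦ hbd (congrArg Prod.snd h), ?_, (a', b), ?_⟩
  · exact fun h ↦ ((cartSumBotFst G).map_adj h).ne rfl
  · exact ⟨Or.inl haa', Or.inl haa'⟩

lemma ediam_cartSum_bot [Nonempty α] [Nontrivial β] (hG : ∀ a, ∃ a', G.Adj a a') :
    (cartSum G (⊥ : SimpleGraph β)).ediam = max 2 G.ediam := by
  apply le_antisymm
  · refine ediam_le_of_edist_le ?_
    rintro ⟨a, b⟩ ⟨c, d⟩
    rcases eq_or_ne a c with rfl | hac
    · rcases eq_or_ne b d with rfl | hbd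
      · simp
      · obtain ⟨a', haa'⟩ := hG a
        rw [edist_cartSum_bot_of_fst_eq haa' hbd]
        exact le_max_left _ _
    · rw [edist_cartSum_bot_of_fst_ne hac]
      exact edist_le_ediam.trans (le_max_right _ _)
  · obtain ⟨a⟩ := ‹Nonempty α›
    obtain ⟨b, d, hbd⟩ := exists_pair_ne β
    obtain ⟨a', haa'⟩ := hG a
    refine max_le ?_ (ediam_le_of_edist_le fun u v ↦ ?_)
    · exact (edist_cartSum_bot_of_fst_eq haa' hbd).symm.trans_le edist_le_ediam
    · exact ((cartSumBotFst G).edist_le (u, b) (v, b)).trans edist_le_ediam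

end CartSum

/-- for connected `G` and `n ≥ 2`,
`D(G ⊕ N_n) = max {2, D(G)}`. -/
theorem diam_cartSum_bot {α : Type*} [Fintype α] [Nontrivial α]
    (G : SimpleGraph α) (hG : G.Connected) (n : ℕ) (hn : 2 ≤ n) :
    (cartSum G (⊥ : SimpleGraph (Fin n))).diam = max 2 G.diam := by
  have : Nontrivial (Fin n) := Fin.nontrivial_iff_two_le.mpr hn
  obtain ⟨m, hm⟩ := ENat.ne_top_iff_exists.mp (connected_iff_ediam_ne_top.mp hG)
  rw [diam, ediam_cartSum_bot hG.preconnected.exists_adj_of_nontrivial, diam, ← hm,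
    ← Nat.cast_ofNat, ← Nat.mono_cast.map_max, ENat.toNat_natCast, ENat.toNat_natCast]
end

section
/- If G and H are non-trivial graphs, at least one of them non-complete, and neither G nor H has an isolated vertex, then the diameter of G ⊕ H equals 2. -/
open SimpleGraph

/-!
Every vertex `(a, b)` of `G ⊕ H` is adjacent to `(a', b')` for any neighbour `a'` of `a` in `G`,
whatever `b'` is. So `(a, b)` and `(c, d)` are joined through `(a', d')` with `a' ~ a` in `G` and
`d' ~ d` in `H`, and the diameter is at most `2`. It is not `1` because `G ⊕ H` is not complete:
two non-adjacent vertices `a ≠ c` of `G` give non-adjacent vertices `(a, b)` and `(c, b)`.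
-/

namespace SimpleGraph

variable {V : Type*} {G : SimpleGraph V}

theorem diam_eq_two_of_ne_top [Nontrivial V] (hne : G ≠ ⊤) (h : ∀ u v, G.edist u v ≤ 2) :
    G.diam = 2 := by
  have hediam : G.ediam ≤ 2 := ediam_le_of_edist_le h
  have hfin : G.ediam ≠ ⊤ := ne_top_of_le_ne_top (by decide) hediam
  have hle : G.diam ≤ 2 := ENat.toNat_le_toNat hediam (by decide)
  have hne0 : G.diam ≠ 0 := diam_ne_zero_of_ediam_ne_top hfin
  have hne1 : G.diam ≠ 1 := fun h1 => hne (diam_eq_one.mp h1)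
  omega

end SimpleGraph

section CartSum

variable {α β : Type*} {G : SimpleGraph α} {H : SimpleGraph β}

theorem cartSum_adj {x y : α × β} :
    (cartSum G H).Adj x y ↔ G.Adj x.1 y.1 ∨ H.Adj x.2 y.2 :=
  Iff.rfl

theorem eq_top_of_cartSum_eq_top_left [Nonempty β] (h : cartSum G H = ⊤) : G = ⊤ := by
  obtain ⟨b⟩ := ‹Nonempty β›
  ext a c
  have hadj := congrArg (fun K : SimpleGraph (α × β) => K.Adj (a, b) (c, b)) h
  simpa [cartSum_adj] using hadj

theorem eq_top_of_cartSum_eq_top_right [Nonempty α] (h : cartSum G H = ⊤) : H = ⊤ := by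
  obtain ⟨a⟩ := ‹Nonempty α›
  ext b d
  have hadj := congrArg (fun K : SimpleGraph (α × β) => K.Adj (a, b) (a, d)) h
  simpa [cartSum_adj] using hadj

theorem edist_cartSum_le_two (hG : ∀ u, ¬ _root_.IsIsolated G u)
    (hH : ∀ v, ¬ _root_.IsIsolated H v) (x y : α × β) : (cartSum G H).edist x y ≤ 2 := by
  obtain ⟨a', ha'⟩ : ∃ a', G.Adj x.1 a' := not_forall_not.mp (hG x.1)
  obtain ⟨b', hb'⟩ : ∃ b', H.Adj y.2 b' := not_forall_not.mp (hH y.2)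
  have hx : (cartSum G H).Adj x (a', b') := Or.inl ha'
  have hy : (cartSum G H).Adj (a', b') y := Or.inr hb'.symm
  simpa using edist_le (hx.toWalk.append hy.toWalk)

end CartSum

theorem diam_cartSum_eq_two_of_no_isolated_general {α β : Type*}
    [Nontrivial α] [Nontrivial β]
    (G : SimpleGraph α) (H : SimpleGraph β) (hnc : G ≠ ⊤ ∨ H ≠ ⊤)
    (hG : ∀ u, ¬ _root_.IsIsolated G u) (hH : ∀ v, ¬ _root_.IsIsolated H v) :
    (cartSum G H).diam = 2 := by
  have hne : cartSum G H ≠ ⊤ := fun htop =>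
    hnc.elim (· (eq_top_of_cartSum_eq_top_left htop)) (· (eq_top_of_cartSum_eq_top_right htop))
  exact diam_eq_two_of_ne_top hne (edist_cartSum_le_two hG hH)

/-- if neither factor has an isolated vertex, `D(G ⊕ H) = 2`. -/
theorem diam_cartSum_eq_two_of_no_isolated {α β : Type*}
    [Fintype α] [Fintype β] [Nontrivial α] [Nontrivial β]
    (G : SimpleGraph α) (H : SimpleGraph β) (hnc : G ≠ ⊤ ∨ H ≠ ⊤)
    (hG : ∀ u, ¬ _root_.IsIsolated G u) (hH : ∀ v, ¬ _root_.IsIsolated H v) :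
    (cartSum G H).diam = 2 :=
  diam_cartSum_eq_two_of_no_isolated_general G H hnc hG hH
end

section
/- Let G and H be non-trivial graphs with at least one of them non-complete. If the diameter of H is at most 2 (in particular H is connected), then the diameter of G ⊕ H equals 2. -/
open SimpleGraph

private lemma exists_not_adj_of_ne_top' {γ : Type*} (K : SimpleGraph γ) (hK : K ≠ ⊤) :
    ∃ a c, a ≠ c ∧ ¬ K.Adj a c := by
  by_contra hcon
  push_neg at hcon
  apply hK
  ext a c
  simp only [SimpleGraph.top_adj]
  exact ⟨SimpleGraph.Adj.ne, fun h' => hcon a c h'⟩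

/-- if `D(H) ≤ 2` (with `H` connected), then `D(G ⊕ H) = 2`. -/
theorem diam_cartSum_eq_two_of_diam_le_two {α β : Type*}
    [Fintype α] [Fintype β] [Nontrivial α] [Nontrivial β]
    (G : SimpleGraph α) (H : SimpleGraph β) (hnc : G ≠ ⊤ ∨ H ≠ ⊤)
    (hH : H.Connected) (hd : H.diam ≤ 2) :
    (cartSum G H).diam = 2 := by
  classical
  -- Every pair of vertices is at edist at most 2.
  have key : ∀ x y : α × β, (cartSum G H).edist x y ≤ 2 := by
    intro x y
    by_cases hxy : x = y
    · subst hxy; simp [SimpleGraph.edist_self]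
    by_cases hadj : (cartSum G H).Adj x y
    · calc (cartSum G H).edist x y ≤ 1 := by
            rw [SimpleGraph.edist_eq_one_iff_adj.mpr hadj]
          _ ≤ 2 := by norm_num
    · obtain ⟨a, b⟩ := x
      obtain ⟨c, d⟩ := y
      have hG : ¬ G.Adj a c := fun h => hadj (Or.inl h)
      have hHbd : ¬ H.Adj b d := fun h => hadj (Or.inr h)
      by_cases hbd : b = d
      · subst hbd
        obtain ⟨b', hb'⟩ : ∃ b', H.Adj b b' := by
          obtain ⟨d', hd'⟩ := exists_ne b
          obtain ⟨w⟩ := hH b d'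
          exact ⟨w.getVert 1, w.adj_snd (SimpleGraph.Walk.not_nil_of_ne
            (Ne.symm hd'))⟩
        have e1 : (cartSum G H).Adj (a, b) (a, b') := Or.inr hb'
        have e2 : (cartSum G H).Adj (a, b') (c, b) := Or.inr hb'.symm
        have := SimpleGraph.edist_le (SimpleGraph.Walk.cons e1
          (SimpleGraph.Walk.cons e2 SimpleGraph.Walk.nil))
        simpa using this
      · have hnet : H.ediam ≠ ⊤ := by
          obtain ⟨u, v, huv⟩ := SimpleGraph.exists_edist_eq_ediam_of_finite (G := H)
          rw [← huv]
          exact SimpleGraph.edist_ne_top_iff_reachable.mpr (hH u v)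
        have hdist : H.dist b d ≤ 2 := le_trans (SimpleGraph.dist_le_diam hnet) hd
        have hdist1 : H.dist b d ≠ 1 := fun h =>
          hHbd (SimpleGraph.dist_eq_one_iff_adj.mp h)
        have hdist0 : H.dist b d ≠ 0 := by
          intro h
          exact hbd ((hH b d).dist_eq_zero_iff.mp h)
        have hdist2 : H.dist b d = 2 := by omega
        obtain ⟨w, hw⟩ := hH.exists_walk_length_eq_dist b d
        rw [hdist2] at hw
        cases w with
        | nil => simp at hw
        | cons h1 p =>
          cases p with
          | nil => simp at hw
          | cons h2 q =>
            rename_i e f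
            have hq : q.length = 0 := by
              simp only [SimpleGraph.Walk.length_cons] at hw; omega
            have hmid : f = d := SimpleGraph.Walk.eq_of_length_eq_zero hq
            have e1 : (cartSum G H).Adj (a, b) (a, e) := Or.inr h1
            have e2 : (cartSum G H).Adj (a, e) (c, d) := Or.inr (hmid ▸ h2)
            have := SimpleGraph.edist_le (SimpleGraph.Walk.cons e1
              (SimpleGraph.Walk.cons e2 SimpleGraph.Walk.nil))
            simpa using this
  -- some pair of distinct non-adjacent vertices
  obtain ⟨x, y, hxy, hnadj⟩ :
      ∃ x y : α × β, x ≠ y ∧ ¬ (cartSum G H).Adj x y := by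
    rcases hnc with hGt | hHt
    · obtain ⟨a, c, hac, hnac⟩ := exists_not_adj_of_ne_top' G hGt
      obtain ⟨b⟩ := ‹Nontrivial β›.to_nonempty
      refine ⟨(a, b), (c, b), by simp [hac], ?_⟩
      rintro (h | h)
      · exact hnac h
      · exact h.ne rfl
    · obtain ⟨b, d, hbd, hnbd⟩ := exists_not_adj_of_ne_top' H hHt
      obtain ⟨a⟩ := ‹Nontrivial α›.to_nonempty
      refine ⟨(a, b), (a, d), by simp [hbd], ?_⟩
      rintro (h | h)
      · exact h.ne rfl
      · exact hnbd h
  have h2 := key x y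
  have hnet2 : (cartSum G H).edist x y ≠ ⊤ := by
    intro h
    rw [h] at h2
    exact absurd h2 (by norm_num)
  have hlow : (cartSum G H).edist x y = 2 := by
    have h1 : (cartSum G H).edist x y ≠ 1 := fun h =>
      hnadj (SimpleGraph.edist_eq_one_iff_adj.mp h)
    have h0 : (cartSum G H).edist x y ≠ 0 := fun h =>
      hxy (SimpleGraph.edist_eq_zero_iff.mp h)
    lift (cartSum G H).edist x y to ℕ using hnet2 with n hn
    have hn2 : (n : ℕ∞) ≤ ((2 : ℕ) : ℕ∞) := by exact_mod_cast h2
    have : n ≤ 2 := by exact_mod_cast hn2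
    have hn0 : n ≠ 0 := fun h => h0 (by exact_mod_cast h)
    have hn1 : n ≠ 1 := fun h => h1 (by exact_mod_cast h)
    have : n = 2 := by omega
    exact_mod_cast this
  have hediam : (cartSum G H).ediam = 2 := by
    refine le_antisymm (SimpleGraph.ediam_le_of_edist_le key) ?_
    rw [← hlow]
    exact SimpleGraph.edist_le_ediam
  rw [SimpleGraph.diam, hediam]
  rfl
end

section
/- Let G and H be non-trivial graphs with at least one of them non-complete. If H is connected with diameter greater than 2 and has no isolated vertices, and G is a non-empty graph having at least one isolated vertex, then the diameter of G ⊕ H equals 3. -/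
open SimpleGraph

/-- if `D(H) > 2`, `H` has no isolated vertices, and `G` is a
non-empty graph having an isolated vertex, then `D(G ⊕ H) = 3`. -/
theorem diam_cartSum_eq_three {α β : Type*}
    [Fintype α] [Fintype β] [Nontrivial α] [Nontrivial β]
    (G : SimpleGraph α) (H : SimpleGraph β) (hnc : G ≠ ⊤ ∨ H ≠ ⊤)
    (hH : H.Connected) (hd : 2 < H.diam) (hHiso : ∀ v, ¬ _root_.IsIsolated H v)
    (hGne : G ≠ ⊥) (hGiso : ∃ u, _root_.IsIsolated G u) :
    (cartSum G H).diam = 3 := by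
  classical
  -- an edge of G
  obtain ⟨eG, heG⟩ := SimpleGraph.edgeSet_nonempty.mpr hGne
  obtain ⟨g1, g2⟩ := eG
  have hg : G.Adj g1 g2 := heG
  -- neighbors in H
  have hne : ∀ v : β, ∃ w, H.Adj v w := by
    intro v
    have := hHiso v
    unfold _root_.IsIsolated at this
    push_neg at this
    exact this
  -- isolated vertex of G
  obtain ⟨u, hu⟩ := hGiso
  -- far pair in H
  obtain ⟨b, d, hbd⟩ := H.exists_dist_eq_diam
  have hbd3 : 2 < H.dist b d := hbd ▸ hd
  have hbdne : b ≠ d := by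
    intro h; subst h; simp [SimpleGraph.dist_self] at hbd3
  -- upper bound on all edists
  have hub : ∀ x y : α × β, (cartSum G H).edist x y ≤ 3 := by
    intro x y
    obtain ⟨e, he⟩ := hne x.2
    obtain ⟨f, hf⟩ := hne y.2
    have h1 : (cartSum G H).Adj x (g1, e) := Or.inr he
    have h2 : (cartSum G H).Adj (g1, e) (g2, f) := Or.inl hg
    have h3 : (cartSum G H).Adj (g2, f) y := Or.inr hf.symm
    have := SimpleGraph.edist_le
      (SimpleGraph.Walk.cons h1 (SimpleGraph.Walk.cons h2 (SimpleGraph.Walk.cons h3 SimpleGraph.Walk.nil)))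
    simpa using this
  have hediam_le : (cartSum G H).ediam ≤ 3 :=
    SimpleGraph.ediam_le_of_edist_le (fun x y => hub x y)
  -- lower bound: edist from (u,b) to (u,d) is at least 3
  have hlb : 3 ≤ (cartSum G H).edist (u, b) (u, d) := by
    by_contra hlt
    push_neg at hlt
    have hle2 : (cartSum G H).edist (u, b) (u, d) ≤ 2 := Order.le_of_lt_add_one (by
      norm_num at hlt ⊢; exact hlt)
    have hnt : (cartSum G H).edist (u, b) (u, d) ≠ ⊤ := by
      intro h; rw [h] at hle2; exact absurd hle2 (by simp)
    obtain ⟨p, hp⟩ := SimpleGraph.exists_walk_of_edist_ne_top hnt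
    have hplen : (p.length : ℕ∞) ≤ 2 := hp ▸ hle2
    have hplen' : p.length ≤ 2 := by exact_mod_cast hplen
    cases p with
    | nil => exact hbdne rfl
    | cons h q =>
      cases q with
      | nil =>
        rcases h with h | h
        · exact hu u h
        · have := SimpleGraph.dist_le h.toWalk
          simp at this
          omega
      | cons h2 r =>
        cases r with
        | nil =>
          rename_i w
          have hb : H.Adj b w.2 := by
            rcases h with h | h
            · exact absurd h (hu w.1)
            · exact h
          have hd2 : H.Adj w.2 d := by
            rcases h2 with h2 | h2
            · exact absurd h2.symm (hu w.1)
            · exact h2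
          have := SimpleGraph.dist_le
            (SimpleGraph.Walk.cons hb (SimpleGraph.Walk.cons hd2 SimpleGraph.Walk.nil))
          simp at this
          omega
        | cons h3 s =>
          simp [SimpleGraph.Walk.length_cons] at hplen'
  have hediam : (cartSum G H).ediam = 3 :=
    le_antisymm hediam_le (le_trans hlb SimpleGraph.edist_le_ediam)
  rw [SimpleGraph.diam, hediam]
  rfl
end

section
/- The graph G ⊕ H is disconnected if and only if both G and H have isolated vertices, or G is an empty graph and H is disconnected (up to swapping the roles of G and H). -/
open SimpleGraph

/-!
If `G` has no isolated vertex, then `(a, b)` is adjacent to `(a', d)` for any neighbour `a'` of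
`a` and any `d`, so the `H`-coordinate can be changed freely. A single edge `ef` of `H` then joins
`(a, f)` to `(c, e)` for arbitrary `a, c`, and if `H` is edgeless the walks of a connected `G` do
the job instead. Conversely, a pair of isolated vertices is isolated in `G ⊕ H`, and `Prod.snd`
maps `⊥ ⊕ H` surjectively onto `H`.
-/

section

variable {α β : Type*} {G : SimpleGraph α} {H : SimpleGraph β}

theorem IsIsolated.not_preconnected [Nontrivial α] {u : α} (hu : _root_.IsIsolated G u) :
    ¬ G.Preconnected := fun hG =>
  let ⟨w, huw⟩ := hG.exists_adj_of_nontrivial u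
  hu w huw

theorem IsIsolated.cartSum {u : α} {v : β} (hu : _root_.IsIsolated G u)
    (hv : _root_.IsIsolated H v) : _root_.IsIsolated (cartSum G H) (u, v) := fun w huvw =>
  huvw.elim (hu w.1) (hv w.2)

def cartSumComm (G : SimpleGraph α) (H : SimpleGraph β) : cartSum G H ≃g cartSum H G where
  toEquiv := Equiv.prodComm α β
  map_rel_iff' := Or.comm

def cartSumBotSnd (H : SimpleGraph β) : cartSum (⊥ : SimpleGraph α) H →g H where
  toFun := Prod.snd
  map_rel' h := h.resolve_left id

theorem SimpleGraph.Connected.of_cartSum_bot [Nonempty α]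
    (h : (cartSum (⊥ : SimpleGraph α) H).Connected) : H.Connected :=
  h.map (cartSumBotSnd H) fun b => ⟨(Classical.arbitrary α, b), rfl⟩

theorem SimpleGraph.Reachable.cartSum_left {a c : α} (h : G.Reachable a c)
    (H : SimpleGraph β) (b : β) : (cartSum G H).Reachable (a, b) (c, b) :=
  h.map ⟨fun x => (x, b), Or.inl⟩

section NoIsolated

variable (hG : ∀ u, ¬ _root_.IsIsolated G u)
include hG

theorem cartSum_reachable_same_fst (a : α) (b d : β) :
    (cartSum G H).Reachable (a, b) (a, d) := by
  obtain ⟨a', ha'⟩ : ∃ a', G.Adj a a' := not_forall_not.mp (hG a)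
  have hto : (cartSum G H).Adj (a, b) (a', b) := Or.inl ha'
  have hfrom : (cartSum G H).Adj (a', b) (a, d) := Or.inl ha'.symm
  exact hto.reachable.trans hfrom.reachable

theorem cartSum_preconnected_of_ne_bot (hH : H ≠ ⊥) : (cartSum G H).Preconnected := by
  obtain ⟨e, f, hef⟩ := ne_bot_iff_exists_adj.mp hH
  rintro ⟨a, b⟩ ⟨c, d⟩
  have hjump : (cartSum G H).Adj (a, f) (c, e) := Or.inr hef.symm
  exact (cartSum_reachable_same_fst hG a b f).trans
    (hjump.reachable.trans (cartSum_reachable_same_fst hG c e d))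

theorem cartSum_preconnected_of_preconnected (hGc : G.Preconnected) :
    (cartSum G H).Preconnected := by
  rintro ⟨a, b⟩ ⟨c, d⟩
  exact ((hGc a c).cartSum_left H b).trans (cartSum_reachable_same_fst hG c b d)

theorem cartSum_connected_of_forall_not_isIsolated [Nonempty α] [Nonempty β]
    (hH : H = ⊥ → G.Connected) : (cartSum G H).Connected := by
  refine ⟨?_⟩
  by_cases hbot : H = ⊥
  · exact cartSum_preconnected_of_preconnected hG (hH hbot).preconnected
  · exact cartSum_preconnected_of_ne_bot hG hbot

end NoIsolated

end

/-- `G ⊕ H` is disconnected iff both `G` and `H` have isolated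
vertices, or one factor is empty and the other is disconnected. -/
theorem cartSum_not_connected_iff {α β : Type*} [Nontrivial α] [Nontrivial β]
    (G : SimpleGraph α) (H : SimpleGraph β) :
    ¬ (cartSum G H).Connected ↔
      ((∃ u, _root_.IsIsolated G u) ∧ (∃ v, _root_.IsIsolated H v)) ∨
      (G = ⊥ ∧ ¬ H.Connected) ∨ (H = ⊥ ∧ ¬ G.Connected) := by
  constructor
  · intro hnc
    by_contra! h
    obtain ⟨hiso, hGbot, hHbot⟩ := h
    by_cases hGiso : ∃ u, _root_.IsIsolated G u
    · exact hnc ((cartSumComm H G).connected_iff.mp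
        (cartSum_connected_of_forall_not_isIsolated (hiso hGiso) hGbot))
    · exact hnc (cartSum_connected_of_forall_not_isIsolated (not_exists.mp hGiso) hHbot)
  · rintro (⟨⟨u, hu⟩, v, hv⟩ | ⟨rfl, hHc⟩ | ⟨rfl, hGc⟩) hc
    · exact (hu.cartSum hv).not_preconnected hc.preconnected
    · exact hHc hc.of_cartSum_bot
    · exact hGc ((cartSumComm G ⊥).connected_iff.mp hc).of_cartSum_bot
end

section
/- Let G be a connected graph of diameter exactly 2. Then two distinct vertices u, v of G are mutually maximally distant if and only if u and v are true twins or u and v are non-adjacent. -/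
open SimpleGraph

/-- `u` is maximally distant from `v` in `G`. -/
def MaximallyDistantFrom {α : Type*} (G : SimpleGraph α) (u v : α) : Prop :=
  ∀ w, G.Adj u w → G.dist v w ≤ G.dist v u

/-- in a connected graph of diameter exactly 2, two distinct
vertices are mutually maximally distant iff they are true twins or
non-adjacent. -/
theorem mmd_iff_of_diam_two {α : Type*} [Fintype α]
    (G : SimpleGraph α) (hc : G.Connected) (hd : G.diam = 2)
    (u v : α) (huv : u ≠ v) :
    (MaximallyDistantFrom G u v ∧ MaximallyDistantFrom G v u) ↔
      (TrueTwins G u v ∨ ¬ G.Adj u v) := by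
  have htop : G.ediam ≠ ⊤ := by
    intro h
    rw [SimpleGraph.diam, h] at hd
    simp at hd
  constructor
  · rintro ⟨h1, h2⟩
    by_cases hadj : G.Adj u v
    · left
      refine ⟨huv, fun w => ?_⟩
      have hvu : G.dist v u = 1 := SimpleGraph.dist_eq_one_iff_adj.mpr hadj.symm
      have huv1 : G.dist u v = 1 := SimpleGraph.dist_eq_one_iff_adj.mpr hadj
      constructor
      · rintro (hw | hw)
        · by_cases hvw : v = w
          · right; exact hvw
          · left
            have := h1 w hw
            rw [hvu] at this
            have : G.dist v w = 1 := le_antisymm this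
              (Nat.one_le_iff_ne_zero.mpr (fun h0 => hvw (hc.dist_eq_zero_iff.mp h0)))
            exact SimpleGraph.dist_eq_one_iff_adj.mp this
        · subst hw; left; exact hadj.symm
      · rintro (hw | hw)
        · by_cases huw : u = w
          · right; exact huw
          · left
            have := h2 w hw
            rw [huv1] at this
            have : G.dist u w = 1 := le_antisymm this
              (Nat.one_le_iff_ne_zero.mpr (fun h0 => huw (hc.dist_eq_zero_iff.mp h0)))
            exact SimpleGraph.dist_eq_one_iff_adj.mp this
        · subst hw; left; exact hadj
    · right; exact hadj
  · rintro (⟨_, htw⟩ | hadj)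
    · have hadj : G.Adj u v := by
        have := (htw u).mp (Or.inr rfl)
        rcases this with h | h
        · exact h.symm
        · exact absurd h.symm huv
      have hvu : G.dist v u = 1 := SimpleGraph.dist_eq_one_iff_adj.mpr hadj.symm
      have huv1 : G.dist u v = 1 := SimpleGraph.dist_eq_one_iff_adj.mpr hadj
      constructor
      · intro w hw
        rw [hvu]
        rcases (htw w).mp (Or.inl hw) with h | h
        · exact le_of_eq (SimpleGraph.dist_eq_one_iff_adj.mpr h)
        · subst h; simp [SimpleGraph.dist_self]
      · intro w hw
        rw [huv1]
        rcases (htw w).mpr (Or.inl hw) with h | h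
        · exact le_of_eq (SimpleGraph.dist_eq_one_iff_adj.mpr h)
        · subst h; simp [SimpleGraph.dist_self]
    · have hdist : G.dist u v = 2 := by
        have hle : G.dist u v ≤ 2 := hd ▸ G.dist_le_diam htop
        have hne0 : G.dist u v ≠ 0 := fun h => huv (hc.dist_eq_zero_iff.mp h)
        have hne1 : G.dist u v ≠ 1 := fun h => hadj (SimpleGraph.dist_eq_one_iff_adj.mp h)
        omega
      constructor
      · intro w _
        rw [SimpleGraph.dist_comm (u:=v) (v:=u), hdist]
        exact hd ▸ G.dist_le_diam htop
      · intro w _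
        rw [hdist]
        exact hd ▸ G.dist_le_diam htop
end

section
/- If neither G nor H has true twin vertices, then the Cartesian sum G ⊕ H has no true twin vertices. -/
open SimpleGraph

/-- if neither `G` nor `H` has true twins, then `G ⊕ H` has no
true twins. -/
theorem cartSum_no_true_twins {α β : Type*}
    (G : SimpleGraph α) (H : SimpleGraph β)
    (hG : ∀ u v, ¬ TrueTwins G u v) (hH : ∀ u v, ¬ TrueTwins H u v) :
    ∀ x y, ¬ TrueTwins (cartSum G H) x y := by
  rintro ⟨a, b⟩ ⟨c, d⟩ ⟨hne, hw⟩
  by_cases hac : a = c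
  · subst hac
    have hbd : b ≠ d := fun h => hne (by rw [h])
    apply hH b d
    refine ⟨hbd, fun z => ?_⟩
    have h := hw (a, z)
    simpa [cartSum, Prod.ext_iff] using h
  · by_cases hbd : b = d
    · subst hbd
      apply hG a c
      refine ⟨hac, fun z => ?_⟩
      have h := hw (z, b)
      simpa [cartSum, Prod.ext_iff, eq_comm] using h
    · have h1 : ∀ z, (H.Adj b z ∨ b = z) ↔ (G.Adj c a ∨ H.Adj d z) := by
        intro z
        have h := hw (a, z)
        simpa [cartSum, Prod.ext_iff, Ne.symm hac] using h
      have h2 : ∀ z, (G.Adj a c ∨ H.Adj b z) ↔ (H.Adj d z ∨ d = z) := by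
        intro z
        have h := hw (c, z)
        simpa [cartSum, Prod.ext_iff, hac] using h
      by_cases hadj : G.Adj a c
      · have hb : ∀ z, H.Adj b z ∨ b = z := fun z =>
          (h1 z).mpr (Or.inl hadj.symm)
        have hd : ∀ z, H.Adj d z ∨ d = z := fun z =>
          (h2 z).mp (Or.inl hadj)
        exact hH b d ⟨hbd, fun z => iff_of_true (hb z) (hd z)⟩
      · have h1' : ∀ z, (H.Adj b z ∨ b = z) ↔ H.Adj d z := by
          intro z
          have hca : ¬ G.Adj c a := fun h => hadj h.symm
          simpa [hca] using h1 z
        have hdb : H.Adj d b := (h1' b).mp (Or.inr rfl)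
        have : H.Adj d d := (h1' d).mp (Or.inl hdb.symm)
        exact this.ne rfl
end

section
/- Let G and H be non-trivial graphs. Then ϖ(G ⊕ H) ≥ max{(ϖ(G) − 1)·ω(H), (ϖ(H) − 1)·ω(G)} + 1. -/
open SimpleGraph

lemma tf_bdd {α : Type*} (G : SimpleGraph α) [Fintype α] :
    BddAbove {n | ∃ s : Finset α, IsTFClique G s ∧ s.card = n} := by
  refine ⟨Fintype.card α, fun n ⟨s, _, hc⟩ => ?_⟩
  exact hc ▸ s.card_le_univ.trans_eq (by simp)

lemma card_le_tf {α : Type*} (G : SimpleGraph α) [Fintype α] {s : Finset α}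
    (h : IsTFClique G s) : s.card ≤ tfCliqueNum G :=
  le_csSup (tf_bdd G) ⟨s, h, rfl⟩

lemma exists_tf_max {α : Type*} (G : SimpleGraph α) [Fintype α] :
    ∃ s : Finset α, IsTFClique G s ∧ s.card = tfCliqueNum G := by
  have h0 : (0:ℕ) ∈ {n | ∃ s : Finset α, IsTFClique G s ∧ s.card = n} :=
    ⟨∅, ⟨by simp, by simp⟩, rfl⟩
  exact Nat.sSup_mem ⟨0, h0⟩ (tf_bdd G)

lemma one_le_tf {α : Type*} (G : SimpleGraph α) [Fintype α] [Nonempty α] :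
    1 ≤ tfCliqueNum G := by
  obtain ⟨x⟩ := ‹Nonempty α›
  have : IsTFClique G {x} := by
    constructor
    · simp [SimpleGraph.isClique_iff, Set.Pairwise]
    · intro u hu v hv htw
      simp only [Finset.mem_singleton] at hu hv
      exact htw.1 (hu.trans hv.symm)
  simpa using card_le_tf G this

lemma one_le_cliqueNum {β : Type*} (H : SimpleGraph β) [Fintype β] [Nonempty β] :
    1 ≤ H.cliqueNum := by
  obtain ⟨y⟩ := ‹Nonempty β›
  have h : H.IsClique ({y} : Finset β) := by
    simp [SimpleGraph.isClique_iff, Set.Pairwise]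
  simpa using SimpleGraph.IsClique.card_le_cliqueNum (tc := h)

lemma key {α β : Type*} [Fintype α] [Fintype β] [Nonempty α] [Nonempty β]
    (G : SimpleGraph α) (H : SimpleGraph β) :
    (tfCliqueNum G - 1) * H.cliqueNum + 1 ≤ tfCliqueNum (cartSum G H) := by
  classical
  obtain ⟨S, hS, hScard⟩ := exists_tf_max G
  obtain ⟨T, hT⟩ := H.exists_isNClique_cliqueNum
  have hS1 : 1 ≤ S.card := hScard ▸ one_le_tf G
  have hT1 : 1 ≤ T.card := hT.2 ▸ one_le_cliqueNum H
  obtain ⟨b, hb⟩ := Finset.card_pos.mp hT1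
  -- choose a special vertex a : a universal vertex of S if one exists
  have haux : ∃ a ∈ S, ((∃ u ∈ S, ∀ w, G.Adj u w ∨ u = w) → ∀ w, G.Adj a w ∨ a = w) := by
    by_cases hexu : ∃ u ∈ S, ∀ w, G.Adj u w ∨ u = w
    · obtain ⟨u, hu, huu⟩ := hexu
      exact ⟨u, hu, fun _ => huu⟩
    · obtain ⟨a, ha⟩ := Finset.card_pos.mp hS1
      exact ⟨a, ha, fun h => absurd h hexu⟩
  obtain ⟨a, haS, haU⟩ := haux
  -- every vertex of S other than a has a non-neighbor
  have hnon : ∀ u ∈ S.erase a, ∃ w, ¬ G.Adj u w ∧ u ≠ w := by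
    intro u hu
    by_contra hc
    push_neg at hc
    have huuniv : ∀ w, G.Adj u w ∨ u = w := fun w => or_iff_not_imp_left.mpr (hc w)
    have haU' := haU ⟨u, Finset.mem_of_mem_erase hu, huuniv⟩
    exact hS.2 u (Finset.mem_of_mem_erase hu) a haS
      ⟨Finset.ne_of_mem_erase hu, fun w => iff_of_true (huuniv w) (haU' w)⟩
  set W : Finset (α × β) := (S.erase a) ×ˢ T ∪ {(a, b)} with hW
  have hmemW : ∀ x : α × β, x ∈ W ↔ (x.1 ∈ S.erase a ∧ x.2 ∈ T) ∨ x = (a, b) := by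
    intro x
    simp [hW, Finset.mem_product]
    exact or_comm
  have hfstS : ∀ x : α × β, x ∈ W → x.1 ∈ S := by
    intro x hx
    rcases (hmemW x).mp hx with ⟨h1, _⟩ | rfl
    · exact Finset.mem_of_mem_erase h1
    · exact haS
  -- W is a clique
  have hWclique : (cartSum G H).IsClique ↑W := by
    intro x hx y hy hxy
    simp only [Finset.mem_coe] at hx hy
    show G.Adj x.1 y.1 ∨ H.Adj x.2 y.2
    by_cases h1 : x.1 = y.1
    · rcases (hmemW x).mp hx with ⟨hx1, hx2⟩ | rfl <;>
        rcases (hmemW y).mp hy with ⟨hy1, hy2⟩ | hy'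
      · right
        exact hT.1 hx2 hy2 (fun h2 => hxy (Prod.ext h1 h2))
      · exact absurd (h1.trans (congrArg Prod.fst hy')) (Finset.ne_of_mem_erase hx1)
      · exact absurd h1.symm (Finset.ne_of_mem_erase hy1)
      · exact absurd hy'.symm hxy
    · exact Or.inl (hS.1 (hfstS x hx) (hfstS y hy) h1)
  -- W is twins-free
  have hWtf : ∀ u ∈ W, ∀ v ∈ W, ¬ TrueTwins (cartSum G H) u v := by
    intro u hu v hv htw
    obtain ⟨huv, htw⟩ := htw
    by_cases h1 : u.1 = v.1
    · -- same first coordinate: both in the product part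
      have hprod : (u.1 ∈ S.erase a ∧ u.2 ∈ T) ∧ (v.1 ∈ S.erase a ∧ v.2 ∈ T) := by
        rcases (hmemW u).mp hu with h | rfl <;> rcases (hmemW v).mp hv with h' | hv'
        · exact ⟨h, h'⟩
        · exact absurd (h1.trans (congrArg Prod.fst hv')) (Finset.ne_of_mem_erase h.1)
        · exact absurd h1.symm (Finset.ne_of_mem_erase h'.1)
        · exact absurd hv'.symm huv
      obtain ⟨⟨hu1, hu2⟩, ⟨hv1, hv2⟩⟩ := hprod
      have h2 : u.2 ≠ v.2 := fun h => huv (Prod.ext h1 h)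
      obtain ⟨w, hw1, hw2⟩ := hnon u.1 hu1
      have hr : ((cartSum G H).Adj v (w, u.2) ∨ v = (w, u.2)) :=
        Or.inl (Or.inr (hT.1 hv2 hu2 h2.symm))
      rcases (htw (w, u.2)).mpr hr with (hA | hA) | hA
      · exact hw1 hA
      · exact hA.ne rfl
      · exact hw2 (congrArg Prod.fst hA)
    · -- different first coordinates: use that S is twins-free
      have hu1S := hfstS u hu
      have hv1S := hfstS v hv
      have hnt := hS.2 u.1 hu1S v.1 hv1S
      rw [TrueTwins] at hnt
      push_neg at hnt
      obtain ⟨w, hw⟩ := hnt h1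
      have main : ∀ p q : α × β, p.1 ∈ S → q.1 ∈ S → p.1 ≠ q.1 →
          (∀ x, ((cartSum G H).Adj p x ∨ p = x) ↔ ((cartSum G H).Adj q x ∨ q = x)) →
          (G.Adj p.1 w ∨ p.1 = w) → (¬ G.Adj q.1 w ∧ q.1 ≠ w) → False := by
        intro p q hpS hqS hpq htw' hL hR
        have hGp : G.Adj p.1 w := by
          rcases hL with h | h
          · exact h
          · exact absurd (h ▸ hS.1 hqS hpS hpq.symm) hR.1
        have := (htw' (w, q.2)).mp (Or.inl (Or.inl hGp))
        rcases this with (hA | hA) | hA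
        · exact hR.1 hA
        · exact hA.ne rfl
        · exact hR.2 (congrArg Prod.fst hA)
      rcases hw with ⟨hL, hR⟩ | ⟨hL, hR⟩
      · exact main u v hu1S hv1S h1 htw hL hR
      · exact main v u hv1S hu1S (Ne.symm h1) (fun x => (htw x).symm) hR hL
  -- cardinality
  have hnm : (a, b) ∉ (S.erase a) ×ˢ T := by
    simp [Finset.mem_product]
  have hcard : W.card = (S.card - 1) * T.card + 1 := by
    rw [hW, Finset.card_union_of_disjoint (by simp [Finset.disjoint_singleton_right, hnm]),
      Finset.card_product, Finset.card_singleton, Finset.card_erase_of_mem haS]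
  have := card_le_tf (cartSum G H) ⟨hWclique, hWtf⟩
  rw [hcard, hScard, hT.2] at this
  exact this

lemma tf_le_of_iso {α β : Type*} [Fintype α] [Fintype β] {G : SimpleGraph α}
    {G' : SimpleGraph β} (f : G ≃g G') : tfCliqueNum G ≤ tfCliqueNum G' := by
  classical
  obtain ⟨s, hs, hcard⟩ := exists_tf_max G
  have h1 : IsTFClique G' (s.image f) := by
    constructor
    · intro x hx y hy hxy
      simp only [Finset.coe_image, Set.mem_image, Finset.mem_coe] at hx hy
      obtain ⟨u0, hu0, rfl⟩ := hx
      obtain ⟨v0, hv0, rfl⟩ := hy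
      exact f.map_adj_iff.mpr (hs.1 hu0 hv0 (fun h => hxy (congrArg f h)))
    · intro u hu v hv htw
      obtain ⟨u0, hu0, rfl⟩ := Finset.mem_image.mp hu
      obtain ⟨v0, hv0, rfl⟩ := Finset.mem_image.mp hv
      refine hs.2 u0 hu0 v0 hv0 ⟨fun h => htw.1 (congrArg f h), fun w => ?_⟩
      have := htw.2 (f w)
      rw [f.map_adj_iff, f.map_adj_iff] at this
      simpa only [EmbeddingLike.apply_eq_iff_eq] using this
  calc tfCliqueNum G = s.card := hcard.symm
    _ = (s.image f).card := (Finset.card_image_of_injective s f.toEquiv.injective).symm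
    _ ≤ _ := card_le_tf _ h1

def swapIso {α β : Type*} (G : SimpleGraph α) (H : SimpleGraph β) :
    cartSum G H ≃g cartSum H G :=
  ⟨Equiv.prodComm α β, by
    intro x y
    show H.Adj x.2 y.2 ∨ G.Adj x.1 y.1 ↔ G.Adj x.1 y.1 ∨ H.Adj x.2 y.2
    exact or_comm⟩


/-- `ϖ(G ⊕ H) ≥ max{(ϖ(G)−1)·ω(H), (ϖ(H)−1)·ω(G)} + 1`. -/
theorem tfCliqueNum_cartSum_ge_max {α β : Type*}
    [Fintype α] [Fintype β] [Nontrivial α] [Nontrivial β]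
    (G : SimpleGraph α) (H : SimpleGraph β) :
    max ((tfCliqueNum G - 1) * H.cliqueNum) ((tfCliqueNum H - 1) * G.cliqueNum) + 1 ≤
      tfCliqueNum (cartSum G H) := by
  have h1 := key G H
  have h2 := key H G
  have h3 := tf_le_of_iso (swapIso H G)
  omega
end

section
/- Let G and H be non-trivial graphs of orders n and n'. If G has a maximum twins-free clique containing no vertex of degree n − 1, then ϖ(G ⊕ H) ≥ ϖ(G) · ω(H). -/
open SimpleGraph

/-- if `G` has a maximum twins-free clique containing no vertex
of degree `n − 1`, then `ϖ(G ⊕ H) ≥ ϖ(G) · ω(H)`. -/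
theorem tfCliqueNum_cartSum_ge_of_no_universal {α β : Type*}
    [Fintype α] [Fintype β] [Nontrivial α] [Nontrivial β]
    (G : SimpleGraph α) (H : SimpleGraph β) [DecidableRel G.Adj]
    (h : ∃ s : Finset α, IsTFClique G s ∧ s.card = tfCliqueNum G ∧
      ∀ v ∈ s, G.degree v ≠ Fintype.card α - 1) :
    tfCliqueNum G * H.cliqueNum ≤ tfCliqueNum (cartSum G H) := by
  obtain ⟨s, hsTF, hscard, hdeg⟩ := h
  obtain ⟨t, htcl⟩ := H.exists_isNClique_cliqueNum
  -- candidate clique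
  have hclique : (cartSum G H).IsClique ↑(s ×ˢ t) := by
    intro x hx y hy hxy
    simp only [Finset.coe_product, Set.mem_prod, Finset.mem_coe] at hx hy
    by_cases h1 : x.1 = y.1
    · have h2 : x.2 ≠ y.2 := fun h2 => hxy (Prod.ext h1 h2)
      exact Or.inr (htcl.isClique hx.2 hy.2 h2)
    · exact Or.inl (hsTF.1 hx.1 hy.1 h1)
  have htf : ∀ u ∈ s ×ˢ t, ∀ v ∈ s ×ˢ t, ¬ TrueTwins (cartSum G H) u v := by
    rintro ⟨a, b⟩ hu ⟨c, d⟩ hv ⟨hne, htw⟩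
    simp only [Finset.mem_product] at hu hv
    by_cases hac : a = c
    · subst hac
      have hbd : b ≠ d := fun h' => hne (by simp [h'])
      -- use non-universal vertex: ∃ z, ¬ G.Adj a z ∧ a ≠ z
      classical
      have : ∃ z, ¬ G.Adj a z ∧ a ≠ z := by
        by_contra hz
        push_neg at hz
        apply hdeg a hu.1
        have heq : G.neighborFinset a = Finset.univ.erase a := by
          ext w
          simp only [mem_neighborFinset, Finset.mem_erase, Finset.mem_univ, and_true]
          constructor
          · exact fun hw => hw.ne'
          · intro hw
            by_contra hna
            exact hw (hz w hna).symm
        rw [degree, heq, Finset.card_erase_of_mem (Finset.mem_univ a),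
          Finset.card_univ]
      obtain ⟨z, hz1, hz2⟩ := this
      have := (htw (z, b)).mpr
      have hr : (cartSum G H).Adj (a, d) (z, b) :=
        Or.inr (htcl.isClique hv.2 hu.2 hbd.symm)
      rcases this (Or.inl hr) with hl | hl
      · rcases hl with hl | hl
        · exact hz1 hl
        · exact (H.loopless.irrefl b) hl
      · exact hz2 (congrArg Prod.fst hl)
    · -- a ≠ c : not true twins in G, get witness w
      have hntw := hsTF.2 a hu.1 c hv.1
      have : ∃ w, ¬ ((G.Adj a w ∨ a = w) ↔ (G.Adj c w ∨ c = w)) := by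
        by_contra hw
        push_neg at hw
        exact hntw ⟨hac, hw⟩
      obtain ⟨w, hw⟩ := this
      have hGac : G.Adj a c := hsTF.1 hu.1 hv.1 hac
      by_cases hA : (G.Adj a w ∨ a = w) <;> by_cases hC : (G.Adj c w ∨ c = w)
      · exact hw ⟨fun _ => hC, fun _ => hA⟩
      · simp only [not_or] at hC
        have haw : G.Adj a w := by
          rcases hA with h1 | h1
          · exact h1
          · exact absurd (h1 ▸ hGac.symm) hC.1
        have key := (htw (w, d)).mp (Or.inl (Or.inl haw))
        rcases key with hl | hl
        · rcases hl with h1 | h1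
          · exact hC.1 h1
          · exact (H.loopless.irrefl d) h1
        · exact hC.2 (congrArg Prod.fst hl)
      · simp only [not_or] at hA
        have hcw : G.Adj c w := by
          rcases hC with h1 | h1
          · exact h1
          · exact absurd (h1 ▸ hGac) hA.1
        have key := (htw (w, b)).mpr (Or.inl (Or.inl hcw))
        rcases key with hl | hl
        · rcases hl with h1 | h1
          · exact hA.1 h1
          · exact (H.loopless.irrefl b) h1
        · exact hA.2 (congrArg Prod.fst hl)
      · exact hw ⟨fun h1 => absurd h1 hA, fun h1 => absurd h1 hC⟩
  have hmem : (s ×ˢ t).card ∈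
      {n | ∃ u : Finset (α × β), IsTFClique (cartSum G H) u ∧ u.card = n} :=
    ⟨s ×ˢ t, ⟨hclique, htf⟩, rfl⟩
  have hbdd : BddAbove
      {n | ∃ u : Finset (α × β), IsTFClique (cartSum G H) u ∧ u.card = n} :=
    ⟨Fintype.card (α × β), fun n ⟨u, _, hc⟩ => hc ▸ u.card_le_univ⟩
  calc tfCliqueNum G * H.cliqueNum = (s ×ˢ t).card := by
        rw [Finset.card_product, hscard, htcl.card_eq]
    _ ≤ tfCliqueNum (cartSum G H) := le_csSup hbdd hmem
end

section
/- Let G and H be finite graphs of orders n and n' such that G ⊕ H is connected. Then dim_s(G ⊕ H) ≤ n·n' − ϖ(G)·ϖ(H). -/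
open SimpleGraph

/-- Key auxiliary: if `w` is in the closed neighborhood of `u` but not of `v`,
where `u ≠ v` are in a clique `C`, then `w ∉ C` and `w` strongly resolves. -/
lemma aux_resolve {α : Type*} (Γ : SimpleGraph α) (hc : Γ.Connected)
    (C : Finset α) (hC : IsTFClique Γ C) {u v w : α} (hu : u ∈ C) (hv : v ∈ C)
    (hne : u ≠ v) (hw1 : Γ.Adj u w ∨ u = w) (hw2 : ¬(Γ.Adj v w ∨ v = w)) :
    w ∉ C ∧ Γ.dist w v = Γ.dist w u + Γ.dist u v := by
  push_neg at hw2
  obtain ⟨hwv, hvw⟩ := hw2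
  have hadj : Γ.Adj u v := hC.1 (Finset.mem_coe.mpr hu) (Finset.mem_coe.mpr hv) hne
  have huw : Γ.Adj u w := by
    rcases hw1 with h | h
    · exact h
    · exact absurd (h ▸ hadj) (fun h' => hwv h'.symm)
  have hwC : w ∉ C := fun hwc =>
    hwv (hC.1 (Finset.mem_coe.mpr hv) (Finset.mem_coe.mpr hwc) hvw)
  refine ⟨hwC, ?_⟩
  have d1 : Γ.dist w u = 1 := dist_eq_one_iff_adj.mpr huw.symm
  have d2 : Γ.dist u v = 1 := dist_eq_one_iff_adj.mpr hadj
  have hle : Γ.dist w v ≤ 2 := by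
    calc Γ.dist w v ≤ Γ.dist w u + Γ.dist u v := hc.dist_triangle
    _ = 2 := by rw [d1, d2]
  have hpos : 0 < Γ.dist w v := hc.pos_dist_of_ne (fun h => hvw h.symm)
  have hne1 : Γ.dist w v ≠ 1 := fun h => hwv (dist_eq_one_iff_adj.mp h).symm
  rw [d1, d2]
  omega

/-- The complement of a twins-free clique is a strong resolving set. -/
lemma strongResolving_compl_tfClique {α : Type*} [Fintype α] [DecidableEq α]
    (Γ : SimpleGraph α) (hc : Γ.Connected) (C : Finset α) (hC : IsTFClique Γ C) :
    IsStrongResolvingSet Γ ↑(Finset.univ \ C) := by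
  intro u v hne
  by_cases hu : u ∈ C
  · by_cases hv : v ∈ C
    · -- both in the clique; use the non-twin condition
      have hnt := hC.2 u hu v hv
      rw [TrueTwins, not_and] at hnt
      have := hnt hne
      push_neg at this
      obtain ⟨w, hw⟩ := this
      rcases hw with ⟨h1, h2a, h2b⟩ | ⟨⟨h2a, h2b⟩, h1⟩
      · obtain ⟨hwC, hd⟩ := aux_resolve Γ hc C hC hu hv hne h1
          (by push_neg; exact ⟨h2a, h2b⟩)
        exact ⟨w, by simp [hwC], Or.inr hd⟩
      · obtain ⟨hwC, hd⟩ := aux_resolve Γ hc C hC hv hu hne.symm h1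
          (by push_neg; exact ⟨h2a, h2b⟩)
        exact ⟨w, by simp [hwC], Or.inl hd⟩
    · exact ⟨v, by simp [hv], Or.inl (by rw [SimpleGraph.dist_self]; omega)⟩
  · exact ⟨u, by simp [hu], Or.inr (by rw [SimpleGraph.dist_self]; omega)⟩

/-- The set attaining `tfCliqueNum`. -/
lemma exists_tfClique_card {α : Type*} [Fintype α] (G : SimpleGraph α) :
    ∃ s : Finset α, IsTFClique G s ∧ s.card = tfCliqueNum G := by
  have hne : {n | ∃ s : Finset α, IsTFClique G s ∧ s.card = n}.Nonempty := by
    refine ⟨0, ∅, ⟨?_, ?_⟩, by simp⟩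
    · simp [SimpleGraph.IsClique]
    · intro u hu; simp at hu
  have hbdd : BddAbove {n | ∃ s : Finset α, IsTFClique G s ∧ s.card = n} := by
    refine ⟨Fintype.card α, fun n hn => ?_⟩
    obtain ⟨s, _, rfl⟩ := hn
    exact s.card_le_univ.trans_eq Finset.card_univ
  have := Nat.sSup_mem hne hbdd
  obtain ⟨s, hs, hcard⟩ := this
  exact ⟨s, hs, hcard⟩

/-- if `G ⊕ H` is connected, then
`dim_s(G ⊕ H) ≤ n·n' − ϖ(G)·ϖ(H)`. -/
theorem sdim_cartSum_le {α β : Type*} [Fintype α] [Fintype β]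
    (G : SimpleGraph α) (H : SimpleGraph β)
    (hconn : (cartSum G H).Connected) :
    sdim (cartSum G H) ≤
      Fintype.card α * Fintype.card β - tfCliqueNum G * tfCliqueNum H := by
  classical
  obtain ⟨S, hS, hScard⟩ := exists_tfClique_card G
  obtain ⟨T, hT, hTcard⟩ := exists_tfClique_card H
  set C : Finset (α × β) := S ×ˢ T with hCdef
  have hclique : IsTFClique (cartSum G H) C := by
    constructor
    · intro x hx y hy hxy
      simp only [hCdef, Finset.coe_product, Set.mem_prod, Finset.mem_coe] at hx hy
      by_cases h1 : x.1 = y.1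
      · have h2 : x.2 ≠ y.2 := fun h => hxy (Prod.ext h1 h)
        exact Or.inr (hT.1 (Finset.mem_coe.mpr hx.2) (Finset.mem_coe.mpr hy.2) h2)
      · exact Or.inl (hS.1 (Finset.mem_coe.mpr hx.1) (Finset.mem_coe.mpr hy.1) h1)
    · rintro ⟨s, t⟩ hst ⟨s', t'⟩ hst' ⟨hne, htw⟩
      simp only [hCdef, Finset.mem_product] at hst hst'
      by_cases hss : s = s'
      · subst hss
        have hne2 : t ≠ t' := fun h => hne (by rw [h])
        refine hT.2 t hst.2 t' hst'.2 ⟨hne2, fun y => ?_⟩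
        have := htw (s, y)
        simp only [cartSum, Prod.mk.injEq] at this
        constructor
        · intro h
          rcases (this.mp (by tauto)) with (h' | h') | h'
          · exact absurd h' (G.loopless.irrefl s)
          · exact Or.inl h'
          · exact Or.inr h'.2
        · intro h
          rcases (this.mpr (by tauto)) with (h' | h') | h'
          · exact absurd h' (G.loopless.irrefl s)
          · exact Or.inl h'
          · exact Or.inr h'.2
      · -- s ≠ s' : show s, s' true twins in G
        have hGadj : G.Adj s s' := hS.1 (Finset.mem_coe.mpr hst.1)
          (Finset.mem_coe.mpr hst'.1) hss
        refine hS.2 s hst.1 s' hst'.1 ⟨hss, fun x => ?_⟩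
        constructor
        · intro h
          rcases h with h | h
          · have := (htw (x, t')).mp (by simp [cartSum]; tauto)
            simp only [cartSum, Prod.mk.injEq] at this
            rcases this with (h' | h') | h'
            · exact Or.inl h'
            · exact absurd h' (H.loopless.irrefl t')
            · exact Or.inr h'.1
          · exact Or.inl (h ▸ hGadj.symm)
        · intro h
          rcases h with h | h
          · have := (htw (x, t)).mpr (by simp [cartSum]; tauto)
            simp only [cartSum, Prod.mk.injEq] at this
            rcases this with (h' | h') | h'
            · exact Or.inl h'
            · exact absurd h' (H.loopless.irrefl t)
            · exact Or.inr h'.1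
          · exact Or.inl (h ▸ hGadj)
  have hres := strongResolving_compl_tfClique (cartSum G H) hconn C hclique
  have hmem : Fintype.card α * Fintype.card β - tfCliqueNum G * tfCliqueNum H ∈
      {n | ∃ W : Finset (α × β), IsStrongResolvingSet (cartSum G H) ↑W ∧ W.card = n} := by
    refine ⟨Finset.univ \ C, hres, ?_⟩
    rw [Finset.card_sdiff_of_subset (Finset.subset_univ C), Finset.card_univ, Fintype.card_prod,
      hCdef, Finset.card_product, hScard, hTcard]
  exact Nat.sInf_le hmem
end
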